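/- Let ε > 0 with ε ≠ 2, and let f be the function defined by f(x) = (ε/4)·(1/(ε+2))·exp(εx/4) for x < 0 and f(x) = (ε/4)·[ (1/(ε−2) + 1/(ε+2))·exp(−x/2) − (1/(ε−2))·exp(−εx/4) ] for x ≥ 0 (the density of the sum of independent χ²₂ and Laplace(0,4/ε) random variables). Then for every x ∈ ℝ, ∫_{−∞}^{x} f(u) du equals: (1/(ε+2))·exp(εx/4) if x < 0, and 1 − (ε/2)·(1/(ε−2) + 1/(ε+2))·exp(−x/2) + (1/(ε−2))·exp(−εx/4) if x ≥ 0. In particular this piecewise function is the cumulative distribution function of the perturbed χ² test statistic T + Y. -/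

import Mathlib

open MeasureTheory Real Set

/-!
Split the integral at `0`. On `(-∞, 0]` the density is a single exponential, on `(0, x]` a
combination of two, and each piece integrates in closed form; for `x ≥ 0` the constant terms add
up to `1 / (ε + 2) + ε² / (ε² - 4) - (ε + 2) / (ε² - 4) = 1`.
-/

section Piecewise

variable {g h : ℝ → ℝ} {a x : ℝ}

theorem setIntegral_Iic_ite_of_le (hx : x ≤ a) :
    ∫ u in Iic x, (if u < a then g u else h u) = ∫ u in Iic x, g u := by
  refine setIntegral_congr_ae measurableSet_Iic ?_
  filter_upwards [Measure.ae_ne volume a] with u hua hux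
  rw [if_pos ((hux.trans hx).lt_of_ne hua)]

theorem setIntegral_Iic_ite_of_ge (hg : IntegrableOn g (Iic a))
    (hh : IntervalIntegrable h volume a x) (hx : a ≤ x) :
    ∫ u in Iic x, (if u < a then g u else h u) = (∫ u in Iic a, g u) + ∫ u in a..x, h u := by
  have h_eq : EqOn (fun u => if u < a then g u else h u) h (Ioc a x) :=
    fun u hu => if_neg (not_lt.2 hu.1.le)
  have h_int : IntegrableOn (fun u => if u < a then g u else h u) (Ioc a x) :=
    ((intervalIntegrable_iff_integrableOn_Ioc_of_le hx).1 hh).congr_fun h_eq.symm measurableSet_Ioc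
  have g_int : IntegrableOn (fun u => if u < a then g u else h u) (Iic a) := by
    refine hg.congr_fun_ae ?_
    rw [Filter.EventuallyEq, ae_restrict_iff' measurableSet_Iic]
    filter_upwards [Measure.ae_ne volume a] with u hua hux
    rw [if_pos (hux.lt_of_ne hua)]
  rw [← Iic_union_Ioc_eq_Iic hx, setIntegral_union (Iic_disjoint_Ioc le_rfl) measurableSet_Ioc
    g_int h_int, setIntegral_Iic_ite_of_le le_rfl, intervalIntegral.integral_of_le hx,
    setIntegral_congr_fun measurableSet_Ioc h_eq]

end Piecewise

theorem integral_exp_mul {c : ℝ} (hc : c ≠ 0) (a b : ℝ) :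
    ∫ u in a..b, exp (c * u) = (exp (c * b) - exp (c * a)) / c := by
  rw [intervalIntegral.integral_comp_mul_left exp hc, integral_exp, smul_eq_mul, inv_mul_eq_div]

/-- The cumulative distribution function
`F(x) = ∫_{−∞}^{x} f(u) du` of the density `f` of the perturbed χ² test
statistic `T + Y` (with `T ~ χ²₂` and `Y ~ Laplace(0, 4/ε)` independent)
equals the stated piecewise expression. -/
theorem perturbed_chiSq_cdf (ε : ℝ) (hε : 0 < ε) (hε2 : ε ≠ 2) (x : ℝ) :
    (∫ u in Set.Iic x,
        (if u < 0 then (ε / 4) * (1 / (ε + 2)) * exp (ε * u / 4)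
          else (ε / 4) * ((1 / (ε - 2) + 1 / (ε + 2)) * exp (-u / 2)
            - (1 / (ε - 2)) * exp (-ε * u / 4))))
      = if x < 0 then (1 / (ε + 2)) * exp (ε * x / 4)
        else 1 - (ε / 2) * (1 / (ε - 2) + 1 / (ε + 2)) * exp (-x / 2)
          + (1 / (ε - 2)) * exp (-ε * x / 4) := by
  have hc : 0 < ε / 4 := by positivity
  -- exponents in the form `c * u` expected by `integral_exp_mul_Iic` and `integral_exp_mul`
  have h₁ (u : ℝ) : ε * u / 4 = ε / 4 * u := by ring
  have h₂ (u : ℝ) : -u / 2 = -(1 / 2) * u := by ring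
  have h₃ (u : ℝ) : -ε * u / 4 = -(ε / 4) * u := by ring
  simp only [h₁, h₂, h₃]
  have h_left (y : ℝ) : ∫ u in Iic y, ε / 4 * (1 / (ε + 2)) * exp (ε / 4 * u)
      = 1 / (ε + 2) * exp (ε / 4 * y) := by
    rw [integral_const_mul, integral_exp_mul_Iic hc]
    field_simp
  rcases lt_or_ge x 0 with hx | hx
  · rw [setIntegral_Iic_ite_of_le hx.le, h_left, if_pos hx]
  · rw [setIntegral_Iic_ite_of_ge ((integrableOn_exp_mul_Iic hc 0).const_mul _)
      (by apply Continuous.intervalIntegrable; fun_prop) hx, h_left, if_neg hx.not_gt,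
      intervalIntegral.integral_const_mul, intervalIntegral.integral_sub
        ((by fun_prop : Continuous _).intervalIntegrable 0 x)
        ((by fun_prop : Continuous _).intervalIntegrable 0 x),
      intervalIntegral.integral_const_mul, intervalIntegral.integral_const_mul,
      integral_exp_mul (by norm_num), integral_exp_mul (neg_ne_zero.2 hc.ne')]
    simp only [mul_zero, exp_zero]
    field_simp
    ring
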